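/- arXiv:2201.06175 — 5 statements merged into one kernel-verified Lean document; each statement's English description precedes it below -/
import Mathlib

section
/- Let G be a finite group and Z a cyclic central subgroup of G. Then every subgroup E with Z ≤ E ≤ G such that E/Z is elementary abelian of order 8 contains the image of an involution of G; that is, there exists an involution g ∈ G with gZ ∈ E/Z and gZ ≠ Z. -/
private lemma sq_mul_aux {G : Type*} [Group G] (a b : G)
    (hb : ∀ x : G, b ^ 2 * x = x * b ^ 2) :
    (a * b) ^ 2 = a ^ 2 * b ^ 2 * (a⁻¹ * b * a * b⁻¹) := by
  have h := hb (a⁻¹ * b * a * b⁻¹)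
  calc (a * b) ^ 2 = a ^ 2 * ((a⁻¹ * b * a * b⁻¹) * b ^ 2) := by
        simp only [pow_two]; group
    _ = a ^ 2 * (b ^ 2 * (a⁻¹ * b * a * b⁻¹)) := by rw [h]
    _ = a ^ 2 * b ^ 2 * (a⁻¹ * b * a * b⁻¹) := by rw [← mul_assoc]

private lemma sigma_mul_aux {G : Type*} [Group G] (a b c : G)
    (hc : ∀ x : G, (a⁻¹ * c * a * c⁻¹) * x = x * (a⁻¹ * c * a * c⁻¹)) :
    (a * b)⁻¹ * c * (a * b) * c⁻¹ =
      (a⁻¹ * c * a * c⁻¹) * (b⁻¹ * c * b * c⁻¹) := by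
  have h := hc b⁻¹
  calc (a * b)⁻¹ * c * (a * b) * c⁻¹
      = b⁻¹ * (a⁻¹ * c * a * c⁻¹) * (c * b * c⁻¹) := by group
    _ = (a⁻¹ * c * a * c⁻¹) * b⁻¹ * (c * b * c⁻¹) := by rw [← h]
    _ = (a⁻¹ * c * a * c⁻¹) * (b⁻¹ * c * b * c⁻¹) := by group

/-- Let `G` be a finite group and `Z` a cyclic central subgroup. Every subgroup `E` with
`Z ≤ E` such that `E/Z` is elementary abelian of order `8` (i.e. `|E| = 8·|Z|` and
`g² ∈ Z` for all `g ∈ E`) contains an involution of `G` lying outside `Z`, i.e. whose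
image in `E/Z` is nontrivial. -/
theorem stmt0 (G : Type*) [Group G] [Finite G] (Z E : Subgroup G)
    (hZcyc : IsCyclic Z) (hZcen : Z ≤ Subgroup.center G) (hZE : Z ≤ E)
    (hcard : Nat.card E = 8 * Nat.card Z)
    (hexp : ∀ g ∈ E, g ^ 2 ∈ Z) :
    ∃ g : G, orderOf g = 2 ∧ g ∈ E ∧ g ∉ Z := by
  classical
  by_contra hcon
  push_neg at hcon
  have hswap : ∀ z ∈ Z, ∀ x : G, x * z = z * x := fun z hz x =>
    Subgroup.mem_center_iff.mp (hZcen hz) x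
  -- Step 1: squares of elements of E \ Z are not squares of elements of Z
  have hNS : ∀ e ∈ E, e ∉ Z → ∀ w ∈ Z, w ^ 2 ≠ e ^ 2 := by
    intro e heE heZ w hwZ hsq
    have huE : e * w⁻¹ ∈ E := mul_mem heE (inv_mem (hZE hwZ))
    have huZ : e * w⁻¹ ∉ Z := fun h => heZ (by
      have he' : e = e * w⁻¹ * w := by group
      rw [he']; exact mul_mem h hwZ)
    have hu1 : e * w⁻¹ ≠ 1 := fun h => huZ (h ▸ one_mem Z)
    have husq : (e * w⁻¹) ^ 2 = 1 := by
      have h2 : w⁻¹ * e = e * w⁻¹ := (hswap w⁻¹ (inv_mem hwZ) e).symm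
      calc (e * w⁻¹) ^ 2 = e * (w⁻¹ * e) * w⁻¹ := by simp only [pow_two]; group
        _ = e * (e * w⁻¹) * w⁻¹ := by rw [h2]
        _ = e ^ 2 * (w ^ 2)⁻¹ := by simp only [pow_two]; group
        _ = 1 := by rw [← hsq]; group
    exact huZ (hcon _ (orderOf_eq_prime husq hu1) huE)
  -- Step 2: the quotient V = E / Z has 8 elements, all of square one
  haveI hZEnormal : (Z.subgroupOf E).Normal := by
    constructor
    intro n hn g
    have hnZ : (n : G) ∈ Z := Subgroup.mem_subgroupOf.mp hn
    refine Subgroup.mem_subgroupOf.mpr ?_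
    show ((g * n * g⁻¹ : E) : G) ∈ Z
    push_cast
    rw [hswap (n : G) hnZ (g : G), mul_inv_cancel_right]
    exact hnZ
  have hcardZpos : 0 < Nat.card Z := Nat.card_pos
  have hV8 : Nat.card (E ⧸ Z.subgroupOf E) = 8 := by
    have h1 := Subgroup.card_eq_card_quotient_mul_card_subgroup (Z.subgroupOf E)
    have h2 : Nat.card (Z.subgroupOf E) = Nat.card Z :=
      Nat.card_congr (Subgroup.subgroupOfEquivOfLe hZE).toEquiv
    rw [h2, hcard] at h1
    have := Nat.eq_of_mul_eq_mul_right hcardZpos h1.symm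
    omega
  haveI : Fintype (E ⧸ Z.subgroupOf E) := Fintype.ofFinite _
  have hVcard : Fintype.card (E ⧸ Z.subgroupOf E) = 8 := by
    rw [← Nat.card_eq_fintype_card, hV8]
  have hVsq : ∀ v : E ⧸ Z.subgroupOf E, v * v = 1 := by
    intro v
    obtain ⟨e, rfl⟩ := QuotientGroup.mk'_surjective (Z.subgroupOf E) v
    rw [← map_mul, QuotientGroup.mk'_apply, QuotientGroup.eq_one_iff]
    refine Subgroup.mem_subgroupOf.mpr ?_
    have hee : ((e * e : E) : G) = (e : G) ^ 2 := by push_cast; rw [pow_two]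
    rw [hee]
    exact hexp _ e.2
  have hinv : ∀ v : E ⧸ Z.subgroupOf E, v⁻¹ = v := fun v =>
    inv_eq_of_mul_eq_one_right (hVsq v)
  have pick : ∀ s : Finset (E ⧸ Z.subgroupOf E), s.card < 8 → ∃ v, v ∉ s := by
    intro s hs
    by_contra h
    push_neg at h
    have hsub : (Finset.univ : Finset (E ⧸ Z.subgroupOf E)) ⊆ s := fun v _ => h v
    have := Finset.card_le_card hsub
    rw [Finset.card_univ, hVcard] at this
    omega
  obtain ⟨x, hx⟩ := pick {1} (by simp)
  simp only [Finset.mem_singleton] at hx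
  obtain ⟨y, hy⟩ := pick {1, x} (by
    have := Finset.card_insert_le (1 : E ⧸ Z.subgroupOf E) ({x} : Finset _)
    simp at this ⊢; omega)
  simp only [Finset.mem_insert, Finset.mem_singleton, not_or] at hy
  obtain ⟨hy1, hyx⟩ := hy
  obtain ⟨w, hw⟩ := pick {1, x, y, x * y} (by
    have h1 := Finset.card_insert_le (1 : E ⧸ Z.subgroupOf E) ({x, y, x*y} : Finset _)
    have h2 := Finset.card_insert_le x ({y, x*y} : Finset (E ⧸ Z.subgroupOf E))
    have h3 := Finset.card_insert_le y ({x*y} : Finset (E ⧸ Z.subgroupOf E))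
    simp at h1 h2 h3 ⊢
    omega)
  simp only [Finset.mem_insert, Finset.mem_singleton, not_or] at hw
  obtain ⟨hw1, hwx, hwy, hwxy⟩ := hw
  -- products are nontrivial
  have hxy1 : x * y ≠ 1 := fun h =>
    hyx (((eq_inv_of_mul_eq_one_left h).trans (hinv y)).symm)
  have hxw1 : x * w ≠ 1 := fun h =>
    hwx (((eq_inv_of_mul_eq_one_left h).trans (hinv w)).symm)
  have hyw1 : y * w ≠ 1 := fun h =>
    hwy (((eq_inv_of_mul_eq_one_left h).trans (hinv w)).symm)
  have hxyw1 : x * y * w ≠ 1 := fun h =>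
    hwxy (((eq_inv_of_mul_eq_one_left h).trans (hinv w)).symm)
  -- lift to elements of G
  have notZ : ∀ e : E, QuotientGroup.mk' (Z.subgroupOf E) e ≠ 1 → (e : G) ∉ Z := by
    intro e hne hmem
    exact hne (by
      rw [QuotientGroup.mk'_apply, QuotientGroup.eq_one_iff]
      exact Subgroup.mem_subgroupOf.mpr hmem)
  obtain ⟨e1, he1⟩ := QuotientGroup.mk'_surjective (Z.subgroupOf E) x
  obtain ⟨e2, he2⟩ := QuotientGroup.mk'_surjective (Z.subgroupOf E) y
  obtain ⟨e3, he3⟩ := QuotientGroup.mk'_surjective (Z.subgroupOf E) w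
  set g1 : G := (e1 : G) with hg1
  set g2 : G := (e2 : G) with hg2
  set g3 : G := (e3 : G) with hg3
  have hg1E : g1 ∈ E := e1.2
  have hg2E : g2 ∈ E := e2.2
  have hg3E : g3 ∈ E := e3.2
  have hg1Z : g1 ∉ Z := notZ e1 (he1 ▸ hx)
  have hg2Z : g2 ∉ Z := notZ e2 (he2 ▸ hy1)
  have hg3Z : g3 ∉ Z := notZ e3 (he3 ▸ hw1)
  have h12Z : g1 * g2 ∉ Z := notZ (e1 * e2) (by rw [map_mul, he1, he2]; exact hxy1)
  have h13Z : g1 * g3 ∉ Z := notZ (e1 * e3) (by rw [map_mul, he1, he3]; exact hxw1)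
  have h23Z : g2 * g3 ∉ Z := notZ (e2 * e3) (by rw [map_mul, he2, he3]; exact hyw1)
  have h123Z : g1 * g2 * g3 ∉ Z :=
    notZ (e1 * e2 * e3) (by rw [map_mul, map_mul, he1, he2, he3]; exact hxyw1)
  have h12E : g1 * g2 ∈ E := mul_mem hg1E hg2E
  have h13E : g1 * g3 ∈ E := mul_mem hg1E hg3E
  have h23E : g2 * g3 ∈ E := mul_mem hg2E hg3E
  have h123E : g1 * g2 * g3 ∈ E := mul_mem h12E hg3E
  -- sigma machinery
  have hsig_rel : ∀ a b : G, b ∈ E → (a * b) ^ 2 = a ^ 2 * b ^ 2 * (a⁻¹ * b * a * b⁻¹) :=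
    fun a b hb => sq_mul_aux a b (fun x => (hswap _ (hexp b hb) x).symm)
  have hsigZ : ∀ a b : G, a ∈ E → b ∈ E → a⁻¹ * b * a * b⁻¹ ∈ Z := by
    intro a b ha hb
    have h1 := hsig_rel a b hb
    have h2 : a⁻¹ * b * a * b⁻¹ = (b ^ 2)⁻¹ * ((a ^ 2)⁻¹ * (a * b) ^ 2) := by
      rw [h1]; simp only [pow_two]; group
    rw [h2]
    exact mul_mem (inv_mem (hexp b hb))
      (mul_mem (inv_mem (hexp a ha)) (hexp _ (mul_mem ha hb)))
  have hbia : ∀ a b c : G, a ∈ E → c ∈ E →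
      (a * b)⁻¹ * c * (a * b) * c⁻¹ = (a⁻¹ * c * a * c⁻¹) * (b⁻¹ * c * b * c⁻¹) :=
    fun a b c ha hc => sigma_mul_aux a b c (fun x => (hswap _ (hsigZ a c ha hc) x).symm)
  -- cyclic generator
  obtain ⟨t, ht⟩ := hZcyc.exists_generator
  have hgen : ∀ z ∈ Z, ∃ i : ℤ, ((t : G)) ^ i = z := by
    intro z hz
    obtain ⟨i, hi⟩ := Subgroup.mem_zpowers_iff.mp (ht ⟨z, hz⟩)
    refine ⟨i, ?_⟩
    have := congrArg (Subtype.val) hi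
    simpa using this
  have hPsq : ∀ i : ℤ, Even i → ∃ w ∈ Z, w ^ 2 = (t : G) ^ i := by
    rintro i ⟨j, hj⟩
    refine ⟨(t : G) ^ j, Z.zpow_mem t.2 j, ?_⟩
    rw [pow_two, ← zpow_add, hj]
  have hOddExp : ∀ e : G, e ∈ E → e ∉ Z → ∀ i : ℤ, (t : G) ^ i = e ^ 2 → i % 2 = 1 := by
    intro e he heZ i hi
    have hne : ¬ Even i := by
      intro hev
      obtain ⟨w', hw'Z, hw'⟩ := hPsq i hev
      exact hNS e he heZ w' hw'Z (hw'.trans hi)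
    rw [Int.even_iff] at hne; omega
  -- exponents
  obtain ⟨a, ha⟩ := hgen _ (hexp g1 hg1E)
  obtain ⟨b, hb⟩ := hgen _ (hexp g2 hg2E)
  obtain ⟨c, hc⟩ := hgen _ (hexp g3 hg3E)
  obtain ⟨p, hp⟩ := hgen _ (hsigZ g1 g2 hg1E hg2E)
  obtain ⟨q, hq⟩ := hgen _ (hsigZ g1 g3 hg1E hg3E)
  obtain ⟨r, hr⟩ := hgen _ (hsigZ g2 g3 hg2E hg3E)
  have hab2 : (g1 * g2) ^ 2 = (t : G) ^ (a + b + p) := by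
    rw [hsig_rel g1 g2 hg2E, ← ha, ← hb, ← hp, ← zpow_add, ← zpow_add]
  have hac2 : (g1 * g3) ^ 2 = (t : G) ^ (a + c + q) := by
    rw [hsig_rel g1 g3 hg3E, ← ha, ← hc, ← hq, ← zpow_add, ← zpow_add]
  have hbc2 : (g2 * g3) ^ 2 = (t : G) ^ (b + c + r) := by
    rw [hsig_rel g2 g3 hg3E, ← hb, ← hc, ← hr, ← zpow_add, ← zpow_add]
  have habc2 : (g1 * g2 * g3) ^ 2 = (t : G) ^ (a + b + p + c + (q + r)) := by
    rw [hsig_rel (g1 * g2) g3 hg3E, hbia g1 g2 g3 hg1E hg3E, hab2, ← hc, ← hq, ← hr,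
      ← zpow_add, ← zpow_add, ← zpow_add]
  -- parity bookkeeping
  have hOa := hOddExp g1 hg1E hg1Z a ha
  have hOb := hOddExp g2 hg2E hg2Z b hb
  have hOc := hOddExp g3 hg3E hg3Z c hc
  have hOab := hOddExp (g1 * g2) h12E h12Z (a + b + p) hab2.symm
  have hOac := hOddExp (g1 * g3) h13E h13Z (a + c + q) hac2.symm
  have hObc := hOddExp (g2 * g3) h23E h23Z (b + c + r) hbc2.symm
  have hEtot : Even (a + b + p + c + (q + r)) := by
    rw [Int.even_iff]; omega
  obtain ⟨w', hw'Z, hw'⟩ := hPsq _ hEtot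
  exact hNS (g1 * g2 * g3) h123E h123Z w' hw'Z (hw'.trans habc2.symm)
end

section
/- Let p be a prime, G a finite group, N a normal subgroup of G whose order is coprime to p, and R a p-subgroup of G. Then, writing bars for images in G/N, one has N_{G/N}(R̄) = (N_G(R))¯ and C_{G/N}(R̄) = (C_G(R))¯, i.e. the normalizer (resp. centralizer) of RN/N in G/N equals the image of the normalizer (resp. centralizer) of R in G. -/
open Subgroup Pointwise

/-- Let `p` be a prime, `G` a finite group, `N` a normal subgroup of order coprime to `p`
and `R` a `p`-subgroup of `G`. Then the normalizer (resp. centralizer) of the image of `R`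
in `G/N` equals the image of the normalizer (resp. centralizer) of `R`. -/
theorem stmt2 (p : ℕ) (hp : p.Prime) (G : Type*) [Group G] [Finite G]
    (N : Subgroup G) [N.Normal] (hN : ¬ p ∣ Nat.card N)
    (R : Subgroup G) (hR : IsPGroup p R) :
    Subgroup.normalizer ((Subgroup.map (QuotientGroup.mk' N) R : Subgroup (G ⧸ N)) : Set (G ⧸ N)) =
      Subgroup.map (QuotientGroup.mk' N) (Subgroup.normalizer (R : Set G)) ∧
    Subgroup.centralizer ((Subgroup.map (QuotientGroup.mk' N) R : Subgroup (G ⧸ N)) : Set (G ⧸ N)) =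
      Subgroup.map (QuotientGroup.mk' N) (Subgroup.centralizer (R : Set G)) := by
  haveI : Fact p.Prime := ⟨hp⟩
  set φ : G →* G ⧸ N := QuotientGroup.mk' N with hφ
  have φsurj : Function.Surjective φ := QuotientGroup.mk'_surjective N
  -- trivial intersection of R and N
  have hRN : ∀ g : G, g ∈ R → g ∈ N → g = 1 := by
    intro g hgR hgN
    obtain ⟨k, hk⟩ := hR ⟨g, hgR⟩
    have hk' : g ^ p ^ k = 1 := by
      have := congrArg (Subtype.val) hk
      simpa using this
    have h1 : orderOf g ∣ p ^ k := orderOf_dvd_of_pow_eq_one hk'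
    have h2 : orderOf g ∣ Nat.card N := by
      have : orderOf (⟨g, hgN⟩ : N) ∣ Nat.card N := orderOf_dvd_natCard _
      simpa [orderOf_mk] using this
    have hcop : Nat.Coprime (p ^ k) (Nat.card N) :=
      Nat.Coprime.pow_left k ((Nat.Prime.coprime_iff_not_dvd hp).mpr hN)
    have : orderOf g ∣ Nat.gcd (p ^ k) (Nat.card N) := Nat.dvd_gcd h1 h2
    rw [Nat.Coprime.gcd_eq_one hcop, Nat.dvd_one] at this
    exact orderOf_eq_one_iff.mp this
  -- main inclusion for the normalizer
  have hmain : normalizer ((map φ R : Subgroup (G ⧸ N)) : Set (G ⧸ N)) ≤ map φ (normalizer (R : Set G)) := by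
    intro x hx
    obtain ⟨g, rfl⟩ := φsurj x
    set M : Subgroup G := (map φ R).comap φ with hM
    have hRM : R ≤ M := fun r hr => mem_comap.mpr (mem_map_of_mem φ hr)
    have hNM : N ≤ M := by
      intro n hn
      have : φ n = 1 := (QuotientGroup.eq_one_iff n).mpr hn
      exact mem_comap.mpr ⟨1, R.one_mem, by simp [this]⟩
    -- counting : |M| = |map φ R| * |N|
    set f : ↥M →* G ⧸ N := φ.domRestrict M with hf
    have hker : f.ker = N.subgroupOf M := by
      rw [hf, MonoidHom.ker_domRestrict, hφ, QuotientGroup.ker_mk']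
    have hrange : f.range = map φ R := by
      rw [hf, MonoidHom.domRestrict_range, hM, map_comap_eq_self_of_surjective φsurj]
    have hcardM : Nat.card M = Nat.card (map φ R) * Nat.card N := by
      have h1 : Nat.card ↥M = Nat.card (↥M ⧸ f.ker) * Nat.card f.ker :=
        Subgroup.card_eq_card_quotient_mul_card_subgroup f.ker
      have h2 : Nat.card (↥M ⧸ f.ker) = Nat.card (map φ R) := by
        rw [Nat.card_congr (QuotientGroup.quotientKerEquivRange f).toEquiv, hrange]
      have h3 : Nat.card f.ker = Nat.card N := by
        rw [hker]; exact Nat.card_congr (subgroupOfEquivOfLe hNM).toEquiv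
      rw [h1, h2, h3]
    have hdvd : Nat.card (map φ R) ∣ Nat.card R :=
      Subgroup.card_dvd_of_surjective (φ.subgroupMap R) (φ.subgroupMap_surjective R)
    have key : ∀ Q : Subgroup ↥M, IsPGroup p Q → Nat.card Q ∣ Nat.card R := by
      intro Q hQ
      obtain ⟨k, hk⟩ := IsPGroup.iff_card.mp hQ
      have h1 : (p ^ k : ℕ) ∣ Nat.card ↥M := hk ▸ Subgroup.card_subgroup_dvd_card Q
      rw [hcardM] at h1
      have hcop : Nat.Coprime (p ^ k) (Nat.card N) :=
        Nat.Coprime.pow_left k ((Nat.Prime.coprime_iff_not_dvd hp).mpr hN)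
      have h2 : (p ^ k : ℕ) ∣ Nat.card (map φ R) := (Nat.Coprime.dvd_of_dvd_mul_right hcop) h1
      exact hk ▸ h2.trans hdvd
    have maxi : ∀ (T : Subgroup ↥M), Nat.card T = Nat.card R →
        ∀ {Q : Subgroup ↥M}, IsPGroup p Q → T ≤ Q → Q = T := by
      intro T hcard Q hQ hle
      refine (Subgroup.eq_of_le_of_card_ge hle ?_).symm
      rw [hcard]
      exact Nat.le_of_dvd Nat.card_pos (key Q hQ)
    -- the two Sylow subgroups of M
    have hgM : ∀ r ∈ R, g * r * g⁻¹ ∈ M := by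
      intro r hr
      have h1 : φ g * φ r * (φ g)⁻¹ ∈ map φ R :=
        (mem_normalizer_iff.mp hx (φ r)).mp (mem_map_of_mem φ hr)
      simpa [hM, mem_comap, map_mul] using h1
    set S : Subgroup G := R.map (MulAut.conj g).toMonoidHom with hS
    have hSp : IsPGroup p S := hR.map _
    have hSM : S ≤ M := by
      rintro y ⟨r, hr, rfl⟩
      simpa [MulAut.conj_apply, mul_assoc] using hgM r hr
    have hcardS : Nat.card S = Nat.card R :=
      (Nat.card_congr (Subgroup.equivMapOfInjective R _ (MulAut.conj g).injective).toEquiv).symm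
    have hR'p : IsPGroup p (R.subgroupOf M) := hR.of_equiv (subgroupOfEquivOfLe hRM).symm
    have hS'p : IsPGroup p (S.subgroupOf M) := hSp.of_equiv (subgroupOfEquivOfLe hSM).symm
    have hcardR' : Nat.card (R.subgroupOf M) = Nat.card R :=
      Nat.card_congr (subgroupOfEquivOfLe hRM).toEquiv
    have hcardS' : Nat.card (S.subgroupOf M) = Nat.card R :=
      (Nat.card_congr (subgroupOfEquivOfLe hSM).toEquiv).trans hcardS
    let PR : Sylow p ↥M := ⟨R.subgroupOf M, hR'p, fun hQ hle => maxi _ hcardR' hQ hle⟩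
    let PS : Sylow p ↥M := ⟨S.subgroupOf M, hS'p, fun hQ hle => maxi _ hcardS' hQ hle⟩
    obtain ⟨m, hm⟩ := MulAction.exists_smul_eq ↥M PS PR
    have hconj : MulAut.conj m • (S.subgroupOf M) = R.subgroupOf M := by
      have := congrArg (fun P : Sylow p ↥M => (P : Subgroup ↥M)) hm
      simpa [Sylow.smul_def, Sylow.pointwise_smul_def] using this
    -- the element (↑m) * g normalizes R
    have hnormMem : (↑m : G) * g ∈ normalizer (R : Set G) := by
      rw [mem_normalizer_iff]
      intro y
      constructor
      · intro hy
        have h1 : g * y * g⁻¹ ∈ S := ⟨y, hy, by simp [MulAut.conj_apply, mul_assoc]⟩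
        have hz : (⟨g * y * g⁻¹, hSM h1⟩ : ↥M) ∈ S.subgroupOf M := mem_subgroupOf.mpr h1
        have h2 := hconj ▸ Subgroup.smul_mem_pointwise_smul _ (MulAut.conj m) _ hz
        have h3 : (↑(MulAut.conj m (⟨g * y * g⁻¹, hSM h1⟩ : ↥M)) : G) ∈ R :=
          mem_subgroupOf.mp h2
        have h4 : (↑(MulAut.conj m (⟨g * y * g⁻¹, hSM h1⟩ : ↥M)) : G)
            = (↑m * g) * y * (↑m * g)⁻¹ := by
          simp [MulAut.conj_apply, mul_assoc]
        rwa [h4] at h3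
      · intro hy
        have hw : (⟨(↑m * g) * y * (↑m * g)⁻¹, hRM hy⟩ : ↥M) ∈ R.subgroupOf M :=
          mem_subgroupOf.mpr hy
        rw [← hconj] at hw
        have h2 := Subgroup.mem_pointwise_smul_iff_inv_smul_mem.mp hw
        have h3 : (↑((MulAut.conj m)⁻¹ • (⟨(↑m * g) * y * (↑m * g)⁻¹, hRM hy⟩ : ↥M)) : G) ∈ S :=
          mem_subgroupOf.mp h2
        have h4 : (↑((MulAut.conj m)⁻¹ • (⟨(↑m * g) * y * (↑m * g)⁻¹, hRM hy⟩ : ↥M)) : G)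
            = g * y * g⁻¹ := by
          simp [MulAut.conj_apply, mul_assoc]
        rw [h4] at h3
        obtain ⟨r, hr, heq⟩ := h3
        have : r = y := by
          have : g * r * g⁻¹ = g * y * g⁻¹ := by simpa [MulAut.conj_apply, mul_assoc] using heq
          exact mul_left_cancel (mul_right_cancel this)
        exact this ▸ hr
    -- conclude
    have hmM : (↑m : G) ∈ M := m.2
    obtain ⟨r₀, hr₀, hr₀eq⟩ := mem_comap.mp hmM
    refine ⟨r₀⁻¹ * (↑m * g), mul_mem (inv_mem (le_normalizer hr₀)) hnormMem, ?_⟩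
    rw [map_mul, map_mul, map_inv, hr₀eq]
    group
  have hnorm : normalizer ((map φ R : Subgroup (G ⧸ N)) : Set (G ⧸ N)) = map φ (normalizer (R : Set G)) :=
    le_antisymm hmain (le_normalizer_map φ)
  refine ⟨hnorm, ?_⟩
  apply le_antisymm
  · intro x hx
    have hx' : x ∈ normalizer ((map φ R : Subgroup (G ⧸ N)) : Set (G ⧸ N)) := by
      rw [mem_normalizer_iff]
      intro y
      constructor
      · intro hy
        have h1 : y * x = x * y := mem_centralizer_iff.mp hx y hy
        have : x * y * x⁻¹ = y := by rw [← h1]; group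
        rwa [this]
      · intro hy
        have h1 : (x * y * x⁻¹) * x = x * (x * y * x⁻¹) := mem_centralizer_iff.mp hx _ hy
        have h2 : x * y = x * (x * y * x⁻¹) := by rw [← h1]; group
        have h3 : y = x * y * x⁻¹ := mul_left_cancel h2
        rwa [← h3] at hy
    rw [hnorm] at hx'
    obtain ⟨h, hhN, rfl⟩ := hx'
    have hcent : h ∈ Subgroup.centralizer (R : Set G) := by
      rw [mem_centralizer_iff]
      intro r hr
      have h1 : h * r * h⁻¹ ∈ R := (mem_normalizer_iff.mp hhN r).mp hr
      have h2 : h * r * h⁻¹ * r⁻¹ ∈ N := by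
        rw [← QuotientGroup.eq_one_iff (h * r * h⁻¹ * r⁻¹)]
        have hc : φ r * φ h = φ h * φ r := mem_centralizer_iff.mp hx (φ r) (mem_map_of_mem φ hr)
        have : φ (h * r * h⁻¹ * r⁻¹) = 1 := by
          rw [map_mul, map_mul, map_mul, map_inv, map_inv, ← hc]
          group
        exact this
      have h3 : h * r * h⁻¹ * r⁻¹ ∈ R := mul_mem h1 (inv_mem hr)
      have h4 : h * r * h⁻¹ * r⁻¹ = 1 := hRN _ h3 h2
      have h5 : h * r * h⁻¹ = r := by
        have := congrArg (· * r) h4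
        simpa [mul_assoc] using this
      calc r * h = (h * r * h⁻¹) * h := by rw [h5]
        _ = h * r := by group
    exact ⟨h, hcent, rfl⟩
  · rintro y ⟨h, hh, rfl⟩
    rw [mem_centralizer_iff]
    rintro z hz
    obtain ⟨r, hr, rfl⟩ := hz
    rw [← map_mul, ← map_mul, mem_centralizer_iff.mp hh r hr]
end

section
/- Let p be a prime, G a finite group, and N a normal subgroup of G of order coprime to p. If x ∈ G has order p, then the centralizer of the image of x in G/N equals the image of C_G(x), i.e. C_{G/N}(xN) = C_G(x)N/N. -/
/-- Let `p` be a prime, `G` a finite group, `N` a normal subgroup of order coprime to `p`.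
If `x ∈ G` has order `p`, then `C_{G/N}(xN) = C_G(x)N/N`. -/
theorem stmt3 (p : ℕ) (hp : p.Prime) (G : Type*) [Group G] [Finite G]
    (N : Subgroup G) [N.Normal] (hN : ¬ p ∣ Nat.card N)
    (x : G) (hx : orderOf x = p) :
    Subgroup.centralizer {QuotientGroup.mk' N x} =
      Subgroup.map (QuotientGroup.mk' N) (Subgroup.centralizer {x}) := by
  haveI : Fact p.Prime := ⟨hp⟩
  have hpcop : p.Coprime (Nat.card N) := (hp.coprime_iff_not_dvd).mpr hN
  -- the image of x has order p
  have hxbar : orderOf ((QuotientGroup.mk' N) x) = p := by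
    have hdvd : orderOf ((QuotientGroup.mk' N) x) ∣ p := hx ▸ orderOf_map_dvd _ x
    rcases hp.eq_one_or_self_of_dvd _ hdvd with h1 | h
    · exfalso
      have hxN : x ∈ N := (QuotientGroup.eq_one_iff x).mp (orderOf_eq_one_iff.mp h1)
      have : orderOf (⟨x, hxN⟩ : N) = p := by rw [← hx, ← Subgroup.orderOf_coe]
      exact hN (this ▸ orderOf_dvd_natCard _)
    · exact h
  apply le_antisymm
  · intro q hq
    obtain ⟨g, rfl⟩ := QuotientGroup.mk'_surjective N q
    rw [Subgroup.mem_centralizer_singleton_iff] at hq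
    set y := g * x * g⁻¹ with hy
    have hybar : (QuotientGroup.mk' N) y = (QuotientGroup.mk' N) x := by
      have h1 : (QuotientGroup.mk' N) y
          = (QuotientGroup.mk' N) g * (QuotientGroup.mk' N) x * ((QuotientGroup.mk' N) g)⁻¹ := by
        simp [hy]
      rw [h1, hq, mul_assoc, mul_inv_cancel, mul_one]
    have hyx : y * x⁻¹ ∈ N := by
      have h2 := (QuotientGroup.eq (s := N) (a := x) (b := y)).mp hybar.symm
      have h4 := Subgroup.Normal.conj_mem ‹N.Normal› _ h2 x
      simpa [mul_assoc] using h4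
    set K := N ⊔ Subgroup.zpowers x with hK
    have hNK : N ≤ K := le_sup_left
    have hxK : x ∈ K := Subgroup.mem_sup_right (Subgroup.mem_zpowers x)
    have hyK : y ∈ K := by
      have h6 : y = (y * x⁻¹) * x := by group
      rw [h6]; exact K.mul_mem (hNK hyx) hxK
    -- cardinality of K
    set f : K →* G ⧸ N := (QuotientGroup.mk' N).comp K.subtype with hf
    have hrange : f.range = Subgroup.zpowers ((QuotientGroup.mk' N) x) := by
      rw [hf, MonoidHom.range_comp, Subgroup.range_subtype, hK, Subgroup.map_sup,
        MonoidHom.map_zpowers]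
      have hbot : Subgroup.map (QuotientGroup.mk' N) N = ⊥ := by
        rw [Subgroup.map_eq_bot_iff, QuotientGroup.ker_mk']
      rw [hbot, bot_sup_eq]
    have hker : Nat.card f.ker = Nat.card N := by
      have h7 : f.ker = N.subgroupOf K := by
        ext k
        simp [hf, MonoidHom.mem_ker, QuotientGroup.eq_one_iff, Subgroup.mem_subgroupOf]
      rw [h7]
      exact Nat.card_congr (Subgroup.subgroupOfEquivOfLe hNK).toEquiv
    have hcardK : Nat.card K = p * Nat.card N := by
      have h1 : Nat.card K = Nat.card (K ⧸ f.ker) * Nat.card f.ker :=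
        Subgroup.card_eq_card_quotient_mul_card_subgroup f.ker
      have h2 : Nat.card (K ⧸ f.ker) = p := by
        rw [Nat.card_congr (QuotientGroup.quotientKerEquivRange f).toEquiv, hrange,
          Nat.card_zpowers, hxbar]
      rw [h1, h2, hker]
    -- Sylow subgroups of K have order p, and equal any zpowers of an order-p element inside
    have key : ∀ (R : Sylow p K) (Z : K), orderOf Z = p → Subgroup.zpowers Z ≤ R →
        Subgroup.zpowers Z = (R : Subgroup K) := by
      intro R Z hZ hle
      have hcZ : Nat.card (Subgroup.zpowers Z) = p := by rw [Nat.card_zpowers, hZ]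
      obtain ⟨n, hn⟩ := R.2.exists_card_eq
      have hdvd : (p : ℕ) ^ n ∣ p * Nat.card N := by
        rw [← hn, ← hcardK]
        exact Subgroup.card_subgroup_dvd_card _
      have hcop : (p ^ n).Coprime (Nat.card N) := Nat.Coprime.pow_left n hpcop
      have hdvd2 : (p : ℕ) ^ n ∣ p := Nat.Coprime.dvd_of_dvd_mul_right hcop hdvd
      have hdvd3 : p ∣ (p : ℕ) ^ n := by
        have h12 := Subgroup.card_dvd_of_le hle
        rwa [hcZ, hn] at h12
      have hcR : Nat.card R = p := by rw [hn]; exact Nat.dvd_antisymm hdvd2 hdvd3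
      exact Subgroup.eq_of_le_of_card_ge hle (by rw [hcR, hcZ])
    set X : K := ⟨x, hxK⟩ with hX
    set Y : K := ⟨y, hyK⟩ with hY
    have hordX : orderOf X = p := by rw [← hx, ← Subgroup.orderOf_coe]
    have hordY : orderOf Y = p := by
      rw [← Subgroup.orderOf_coe]
      show orderOf (g * x * g⁻¹) = p
      rw [← hx]
      exact orderOf_injective (MulAut.conj g).toMonoidHom (MulEquiv.injective _) x
    have hPX : IsPGroup p (Subgroup.zpowers X) :=
      IsPGroup.of_card (by rw [Nat.card_zpowers, hordX, pow_one])
    have hPY : IsPGroup p (Subgroup.zpowers Y) :=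
      IsPGroup.of_card (by rw [Nat.card_zpowers, hordY, pow_one])
    obtain ⟨P, hP⟩ := hPX.exists_le_sylow
    obtain ⟨Q, hQ⟩ := hPY.exists_le_sylow
    obtain ⟨k, hk⟩ := MulAction.exists_smul_eq K Q P
    have hmem : k * Y * k⁻¹ ∈ Subgroup.zpowers X := by
      rw [key P X hordX hP, ← hk, Sylow.coe_subgroup_smul]
      exact Subgroup.smul_mem_pointwise_smul Y (MulAut.conj k) Q (hQ (Subgroup.mem_zpowers Y))
    obtain ⟨i, hi⟩ := Subgroup.mem_zpowers_iff.mp hmem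
    have hiG : x ^ i = (k : G) * y * (k : G)⁻¹ := by
      have := congrArg (Subtype.val) hi
      simpa using this
    -- k maps into zpowers of x̄
    have hkbar : (QuotientGroup.mk' N) (k : G) ∈ Subgroup.zpowers ((QuotientGroup.mk' N) x) := by
      rw [← hrange]
      exact ⟨k, rfl⟩
    obtain ⟨j, hj⟩ := Subgroup.mem_zpowers_iff.mp hkbar
    -- mod N, x^i = x, so p ∣ i - 1, so x^i = x
    have hxi : ((QuotientGroup.mk' N) x) ^ i = (QuotientGroup.mk' N) x := by
      have h8 := congrArg (QuotientGroup.mk' N) hiG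
      rw [map_zpow, map_mul, map_mul, map_inv, hybar, ← hj] at h8
      rw [h8]; group
    have hxiG : x ^ i = x := by
      have h9 : ((QuotientGroup.mk' N) x) ^ (i - 1) = 1 := by
        rw [zpow_sub, hxi, zpow_one, mul_inv_cancel]
      have h10 : ((p : ℕ) : ℤ) ∣ i - 1 := by
        rw [← hxbar]; exact orderOf_dvd_iff_zpow_eq_one.mpr h9
      have h11 : x ^ (i - 1) = 1 :=
        orderOf_dvd_iff_zpow_eq_one.mp (by rwa [hx])
      calc x ^ i = x ^ (i - 1) * x ^ (1 : ℤ) := by rw [← zpow_add]; ring_nf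
        _ = x := by rw [h11, one_mul, zpow_one]
    have hconj : (k : G) * y * (k : G)⁻¹ = x := by rw [← hiG, hxiG]
    -- the witness
    refine ⟨x ^ (-j) * (k : G) * g, ?_, ?_⟩
    · rw [SetLike.mem_coe, Subgroup.mem_centralizer_singleton_iff]
      have hky : (k : G) * y = x * (k : G) := by
        rw [← hconj]; group
      calc (x ^ (-j) * (k : G) * g) * x = x ^ (-j) * ((k : G) * y) * g := by rw [hy]; group
        _ = x ^ (-j) * (x * (k : G)) * g := by rw [hky]
        _ = x * (x ^ (-j) * (k : G) * g) := by group
    · rw [map_mul, map_mul, map_zpow, ← hj]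
      group
  · rintro q hq
    rw [Subgroup.mem_map] at hq
    obtain ⟨g, hg, rfl⟩ := hq
    rw [Subgroup.mem_centralizer_singleton_iff] at hg ⊢
    rw [← map_mul, ← map_mul, hg]
end

section
/- Every finite supersolvable group G has a normal 2-complement; that is, there is a normal subgroup N of G of odd order such that G/N is a 2-group. -/
/-!
Induction on `|G|`, for the smallest prime `p` dividing `|G|` in place of `2`. A nontrivial
supersolvable group has a normal subgroup `W` of prime order `q` (inside the first nontrivial
cyclic term of the series), and `G ⧸ W` is again supersolvable, so it has a normal `p`-complement
`N`. If `q ≠ p`, the preimage of `N` is a normal `p`-complement of `G`. If `q = p`, then `W` is a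
cyclic normal Sylow `p`-subgroup of the preimage `M` of `N`, and `p` is the smallest prime
dividing `|M|`, so Burnside's transfer theorem gives a normal `p`-complement `K` of `M`. Being a
normal Hall subgroup, `K` is characteristic in `M`, hence normal in `G`.
-/

open Subgroup

def IsSupersolvable (G : Type*) [Group G] : Prop :=
  ∃ (k : ℕ) (H : ℕ → Subgroup G),
    H 0 = ⊥ ∧ H k = ⊤ ∧ (∀ i < k, H i ≤ H (i + 1)) ∧ (∀ i, (H i).Normal) ∧
    ∀ i < k, ∃ g : G, H (i + 1) = H i ⊔ zpowers g

def Subgroup.IsNormalPComplement {G : Type*} [Group G] (p : ℕ) (N : Subgroup G) : Prop :=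
  N.Normal ∧ ¬ p ∣ Nat.card N ∧ ∃ j : ℕ, N.index = p ^ j

section

variable {G : Type*} [Group G]

theorem IsSupersolvable.of_surjective {Q : Type*} [Group Q] {f : G →* Q}
    (hf : Function.Surjective f) (hG : IsSupersolvable G) : IsSupersolvable Q := by
  obtain ⟨k, H, h0, hk, hmono, hnorm, hgen⟩ := hG
  refine ⟨k, fun i => (H i).map f, by simp only [h0, Subgroup.map_bot],
    by simp only [hk, map_top_of_surjective f hf],
    fun i hi => map_mono (hmono i hi), fun i => (hnorm i).map f hf, fun i hi => ?_⟩
  obtain ⟨g, hg⟩ := hgen i hi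
  exact ⟨f g, by simp only [hg, Subgroup.map_sup, MonoidHom.map_zpowers]⟩

theorem IsSupersolvable.exists_ne_one_zpowers_normal [Nontrivial G] (hG : IsSupersolvable G) :
    ∃ g : G, g ≠ 1 ∧ (zpowers g).Normal := by
  classical
  obtain ⟨k, H, h0, hk, -, hnorm, hgen⟩ := hG
  have hex : ∃ i, H i ≠ ⊥ := ⟨k, hk ▸ top_ne_bot⟩
  have hne : H (Nat.find hex) ≠ ⊥ := Nat.find_spec hex
  obtain ⟨j, hj⟩ := Nat.exists_eq_add_one_of_ne_zero (n := Nat.find hex) fun h => hne (h ▸ h0)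
  rw [hj] at hne
  have hjk : j < k := by
    have := Nat.find_min' hex (hk ▸ top_ne_bot)
    omega
  have hbot : H j = ⊥ := not_not.mp (Nat.find_min hex (hj ▸ j.lt_add_one))
  obtain ⟨g, hg⟩ := hgen j hjk
  rw [hbot, bot_sup_eq] at hg
  refine ⟨g, fun h1 => hne ?_, hg ▸ hnorm (j + 1)⟩
  rw [hg, h1, zpowers_one_eq_bot]

theorem Subgroup.Normal.zpowers_pow {g : G} (hg : (zpowers g).Normal) (n : ℕ) :
    (zpowers (g ^ n)).Normal := by
  refine ⟨fun x hx c => ?_⟩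
  obtain ⟨k, rfl⟩ := mem_zpowers_iff.mp hx
  obtain ⟨l, hl⟩ := mem_zpowers_iff.mp (hg.conj_mem g (mem_zpowers g) c)
  refine mem_zpowers_iff.mpr ⟨l * k, ?_⟩
  rw [← zpow_natCast, ← zpow_mul, ← zpow_mul, ← conj_zpow, ← hl, ← zpow_mul]
  ring_nf

theorem IsSupersolvable.exists_normal_card_prime [Finite G] [Nontrivial G]
    (hG : IsSupersolvable G) : ∃ W : Subgroup G, W.Normal ∧ (Nat.card W).Prime := by
  obtain ⟨g, hg1, hg⟩ := hG.exists_ne_one_zpowers_normal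
  have hord : orderOf g ≠ 1 := by rwa [Ne, orderOf_eq_one_iff]
  refine ⟨zpowers (g ^ (orderOf g / (orderOf g).minFac)), hg.zpowers_pow _, ?_⟩
  rw [Nat.card_zpowers, orderOf_pow_orderOf_div (orderOf_pos g).ne' (Nat.minFac_dvd _)]
  exact Nat.minFac_prime hord

theorem Subgroup.Normal.characteristic_of_coprime {K : Subgroup G} (hK : K.Normal)
    (h : (Nat.card K).Coprime K.index) : K.Characteristic := by
  refine characteristic_iff_map_le.mpr fun φ => ?_
  have hbot : (K.map φ.toMonoidHom).map (QuotientGroup.mk' K) = ⊥ := by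
    refine card_eq_one.mp (Nat.eq_one_of_dvd_coprimes h ?_ (card_subgroup_dvd_card _))
    exact (card_map_dvd _ _).trans (card_map_of_injective φ.injective).dvd
  rw [map_eq_bot_iff, QuotientGroup.ker_mk'] at hbot
  exact hbot

theorem Subgroup.card_comap_mk' (W : Subgroup G) [W.Normal] (N : Subgroup (G ⧸ W)) :
    Nat.card (N.comap (QuotientGroup.mk' W)) = Nat.card W * Nat.card N :=
  QuotientGroup.card_preimage_mk W N

variable {p : ℕ}

theorem Subgroup.IsNormalPComplement.comap_mk' [hp : Fact p.Prime] {W : Subgroup G} [W.Normal]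
    (hW : ¬ p ∣ Nat.card W) {N : Subgroup (G ⧸ W)} (hN : N.IsNormalPComplement p) :
    (N.comap (QuotientGroup.mk' W)).IsNormalPComplement p := by
  obtain ⟨hNn, hNp, j, hj⟩ := hN
  refine ⟨hNn.comap _, ?_, j, ?_⟩
  · rw [card_comap_mk', hp.out.dvd_mul]
    exact not_or_intro hW hNp
  · rw [index_comap_of_surjective _ (QuotientGroup.mk'_surjective W), hj]

theorem IsCyclic.exists_characteristic_isNormalPComplement [Finite G] [hp : Fact p.Prime]
    (hmin : (Nat.card G).minFac = p) (P : Sylow p G) (hP : IsCyclic P) :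
    ∃ K : Subgroup G, K.Characteristic ∧ K.IsNormalPComplement p := by
  set K := (MonoidHom.transferSylow P (hP.normalizer_le_centralizer hmin)).ker
  have hKp : ¬ p ∣ Nat.card K := MonoidHom.not_dvd_card_ker_transferSylow _ _
  obtain ⟨j, hj⟩ := IsPGroup.iff_card.mp P.isPGroup'
  have hidx : K.index = p ^ j := by
    refine Nat.eq_of_mul_eq_mul_left (Nat.card_pos (α := K)) ?_
    rw [card_mul_index, ← hj, (hP.isComplement' hmin).card_mul_card]
  have hcop : (Nat.card K).Coprime K.index :=
    hidx ▸ ((hp.out.coprime_iff_not_dvd.mpr hKp).symm.pow_right j)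
  exact ⟨K, (MonoidHom.normal_ker _).characteristic_of_coprime hcop, MonoidHom.normal_ker _,
    hKp, j, hidx⟩

theorem Subgroup.IsNormalPComplement.map_subtype {M : Subgroup G} [M.Normal]
    (hM : ∃ j : ℕ, M.index = p ^ j) {K : Subgroup M} [K.Characteristic]
    (hK : K.IsNormalPComplement p) : (K.map M.subtype).IsNormalPComplement p := by
  obtain ⟨i, hi⟩ := hM
  obtain ⟨-, hKp, j, hj⟩ := hK
  refine ⟨inferInstance, ?_, j + i, ?_⟩
  · rwa [card_map_of_injective M.subtype_injective]
  · rw [index_map_subtype, hi, hj, pow_add]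

theorem Subgroup.IsNormalPComplement.exists_of_quotient_of_card_eq [Finite G] [hp : Fact p.Prime]
    (hmin : ∀ q, q.Prime → q ∣ Nat.card G → p ≤ q) {W : Subgroup G} [W.Normal]
    (hW : Nat.card W = p) {N : Subgroup (G ⧸ W)} (hN : N.IsNormalPComplement p) :
    ∃ K : Subgroup G, K.IsNormalPComplement p := by
  obtain ⟨hNn, hNp, j, hj⟩ := hN
  set M := N.comap (QuotientGroup.mk' W)
  have hWM : W ≤ M := QuotientGroup.ker_mk' W ▸ ker_le_comap _ N
  have hM : Nat.card M = p * Nat.card N := hW ▸ card_comap_mk' W N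
  have hP : Nat.card (W.subgroupOf M) = p :=
    (Nat.card_congr (subgroupOfEquivOfLe hWM).toEquiv).trans hW
  have hPidx : (W.subgroupOf M).index = Nat.card N := by
    refine Nat.eq_of_mul_eq_mul_left hp.out.pos ?_
    rw [← hM, ← card_mul_index (W.subgroupOf M), hP]
  have hpM : p ∣ Nat.card M := hM ▸ dvd_mul_right p _
  have hminM : (Nat.card M).minFac = p :=
    (Nat.minFac_le_of_dvd hp.out.two_le hpM).antisymm <| hmin _
      (Nat.minFac_prime fun h1 => hp.out.one_lt.ne' (Nat.eq_one_of_dvd_one (h1 ▸ hpM)))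
      ((Nat.minFac_dvd _).trans (card_subgroup_dvd_card M))
  let P : Sylow p M :=
    (IsPGroup.of_card (n := 1) (hP.trans (pow_one p).symm)).toSylow (hPidx ▸ hNp)
  obtain ⟨K, _, hK⟩ :=
    IsCyclic.exists_characteristic_isNormalPComplement hminM P (isCyclic_of_prime_card hP)
  have : M.Normal := hNn.comap _
  exact ⟨_, hK.map_subtype ⟨j, by
    rw [index_comap_of_surjective _ (QuotientGroup.mk'_surjective W), hj]⟩⟩

theorem IsSupersolvable.exists_isNormalPComplement [Finite G] [hp : Fact p.Prime]
    (hG : IsSupersolvable G) (hmin : ∀ q, q.Prime → q ∣ Nat.card G → p ≤ q) :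
    ∃ N : Subgroup G, N.IsNormalPComplement p := by
  induction h : Nat.card G using Nat.strong_induction_on generalizing G with
  | _ n ih =>
  rcases subsingleton_or_nontrivial G with hG1 | hG1
  · refine ⟨⊤, inferInstance, ?_, 0, by rw [index_top, pow_zero]⟩
    rw [card_top, Nat.card_of_subsingleton (1 : G)]
    exact hp.out.not_dvd_one
  obtain ⟨W, hWn, hWp⟩ := hG.exists_normal_card_prime
  have hlt : Nat.card (G ⧸ W) < n :=
    h ▸ card_mul_index W ▸ lt_mul_left Nat.card_pos hWp.one_lt
  obtain ⟨N, hN⟩ := ih _ hlt (hG.of_surjective (QuotientGroup.mk'_surjective W))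
    (fun q hq hqd => hmin q hq (hqd.trans (card_quotient_dvd_card W))) rfl
  by_cases hWp' : Nat.card W = p
  · exact hN.exists_of_quotient_of_card_eq hmin hWp'
  · refine ⟨_, hN.comap_mk' fun hpW => hWp' ?_⟩
    exact ((Nat.prime_dvd_prime_iff_eq hp.out hWp).mp hpW).symm

end

/-- Every finite supersolvable group `G` (i.e. `G` admits a chain
`⊥ = H 0 ≤ H 1 ≤ ⋯ ≤ H k = ⊤` of subgroups, each normal in `G`, with each factor
`H (i+1) / H i` cyclic) has a normal 2-complement: a normal subgroup `N` of odd order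
with `G/N` a 2-group. -/
theorem stmt11 (G : Type*) [Group G] [Finite G]
    (hss : ∃ (k : ℕ) (H : ℕ → Subgroup G),
      H 0 = ⊥ ∧ H k = ⊤ ∧ (∀ i < k, H i ≤ H (i + 1)) ∧ (∀ i, (H i).Normal) ∧
      ∀ i < k, ∃ g : G, H (i + 1) = H i ⊔ Subgroup.zpowers g) :
    ∃ N : Subgroup G, N.Normal ∧ Odd (Nat.card N) ∧ ∃ j : ℕ, Nat.card (G ⧸ N) = 2 ^ j := by
  have : Fact (Nat.Prime 2) := ⟨Nat.prime_two⟩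
  obtain ⟨N, hN, hodd, j, hj⟩ :=
    IsSupersolvable.exists_isNormalPComplement (p := 2) hss fun q hq _ => hq.two_le
  exact ⟨N, hN, Nat.odd_iff.mpr (Nat.two_dvd_ne_zero.mp hodd), j, hj⟩
end

section
/- Let q be a prime power with q ≡ 1 (mod 4), and let 2^k be the 2-part of q − 1. Then the subgroup of GL_2(q) generated by all diagonal matrices diag(λ, μ), where λ and μ are 2-elements of 𝔽_q*, together with the permutation matrix swapping the two coordinates, is a Sylow 2-subgroup of GL_2(q), and it is isomorphic to the wreath product C_{2^k} ≀ C_2. In particular |GL_2(q)|_2 = 2^{2k+1}. -/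
set_option linter.unusedSectionVars false
set_option maxHeartbeats 1000000

namespace Stmt17Aux

variable {F : Type*} [Field F] [Fintype F] [DecidableEq F]

lemma swap_mul_swap : (!![0,1;1,0] : Matrix (Fin 2) (Fin 2) F) * !![0,1;1,0] = 1 := by
  ext i j; fin_cases i <;> fin_cases j <;> simp [Matrix.mul_apply, Fin.sum_univ_succ]

/-- the swap matrix as an element of GL₂ -/
def swapGL : GL (Fin 2) F := ⟨!![0,1;1,0], !![0,1;1,0], swap_mul_swap, swap_mul_swap⟩

lemma vec_one : (![1, 1] : Fin 2 → F) = 1 := by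
  funext i; fin_cases i <;> rfl

lemma diag_mul_diag (a b c d : F) :
    (Matrix.diagonal ![a, b]) * (Matrix.diagonal ![c, d]) = Matrix.diagonal ![a*c, b*d] := by
  rw [Matrix.diagonal_mul_diagonal]
  congr 1
  funext i; fin_cases i <;> rfl

/-- the diagonal embedding Fˣ × Fˣ →* GL₂ F -/
def diagHom : Fˣ × Fˣ →* GL (Fin 2) F where
  toFun p := ⟨Matrix.diagonal ![(p.1 : F), (p.2 : F)],
              Matrix.diagonal ![((p.1⁻¹ : Fˣ) : F), ((p.2⁻¹ : Fˣ) : F)],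
              by rw [diag_mul_diag]; simp only [Units.mul_inv]; rw [vec_one]; exact Matrix.diagonal_one,
              by rw [diag_mul_diag]; simp only [Units.inv_mul]; rw [vec_one]; exact Matrix.diagonal_one⟩
  map_one' := by
    ext : 1
    show Matrix.diagonal ![((1:Fˣ):F), ((1:Fˣ):F)] = 1
    simp only [Units.val_one]; rw [vec_one]; exact Matrix.diagonal_one
  map_mul' x y := by ext : 1; exact (diag_mul_diag _ _ _ _).symm

@[simp] lemma diagHom_val (a b : Fˣ) :
    ((diagHom (a, b) : GL (Fin 2) F) : Matrix (Fin 2) (Fin 2) F)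
      = Matrix.diagonal ![(a:F), (b:F)] := rfl

@[simp] lemma swapGL_val :
    ((swapGL : GL (Fin 2) F) : Matrix (Fin 2) (Fin 2) F) = !![0,1;1,0] := rfl

lemma swapGL_conj_diag (a b : Fˣ) :
    swapGL * diagHom (a, b) * swapGL⁻¹ = diagHom (b, a) := by
  ext : 1
  show !![0,1;1,0] * Matrix.diagonal ![(a:F), b] * !![0,1;1,0] = Matrix.diagonal ![(b:F), a]
  ext i j; fin_cases i <;> fin_cases j <;>
    simp [Matrix.mul_apply, Fin.sum_univ_succ, Matrix.diagonal, Matrix.vecHead, Matrix.vecTail]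

lemma swapGL_ne_one : (swapGL : GL (Fin 2) F) ≠ 1 := by
  intro h
  have h0 : (!![0,1;1,0] : Matrix (Fin 2) (Fin 2) F) = 1 := congrArg Units.val h
  have := congrFun (congrFun h0 0) 0
  simp at this

lemma swapGL_mul_swapGL : (swapGL : GL (Fin 2) F) * swapGL = 1 := by
  ext : 1; exact swap_mul_swap

lemma diagHom_eq_one {u v : Fˣ} (h : diagHom (u, v) = (1 : GL (Fin 2) F)) :
    u = 1 ∧ v = 1 := by
  have hm : Matrix.diagonal ![(u:F), (v:F)] = 1 := congrArg Units.val h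
  have h0 := congrFun (congrFun hm 0) 0
  have h1 := congrFun (congrFun hm 1) 1
  simp [Matrix.diagonal] at h0 h1
  exact ⟨h0, h1⟩

lemma diag_mul_swap_ne_one (u v : Fˣ) :
    diagHom (u, v) * swapGL ≠ (1 : GL (Fin 2) F) := by
  intro h
  have hm : Matrix.diagonal ![(u:F), (v:F)] * !![0,1;1,0] = 1 := congrArg Units.val h
  have h0 := congrFun (congrFun hm 0) 0
  simp [Matrix.mul_apply, Fin.sum_univ_succ, Matrix.diagonal] at h0

lemma sq_one_classify {G : Type*} [Group G] {e : G} (he : e * e = 1) {x : G}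
    (hx : x ∈ Subgroup.zpowers e) : x = 1 ∨ x = e := by
  obtain ⟨n, rfl⟩ := Subgroup.mem_zpowers_iff.mp hx
  have h2 : e ^ (2:ℤ) = 1 := by rw [zpow_two]; exact he
  rcases Int.even_or_odd n with ⟨c, hc⟩ | ⟨c, hc⟩
  · left; rw [hc, ← two_mul, zpow_mul, h2, one_zpow]
  · right; rw [hc, zpow_add, zpow_mul, h2, one_zpow, one_mul, zpow_one]

section M

open scoped Classical

variable (M : Type*) [CommGroup M]

lemma prodComm_sq : (MulEquiv.prodComm : MulAut (M × M)) * MulEquiv.prodComm = 1 := by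
  ext x <;> rfl

lemma prodComm_ne_one [Nontrivial M] : (MulEquiv.prodComm : MulAut (M × M)) ≠ 1 := by
  obtain ⟨a, ha⟩ := exists_ne (1 : M)
  intro h
  have := congrArg (fun f : MulAut (M × M) => (f (a, 1)).2) h
  simp only [MulAut.one_apply] at this
  exact ha this

/-- the map sending the trivial automorphism to 1 and the swap to `swapGL` -/
noncomputable def swapHom : (Subgroup.zpowers (MulEquiv.prodComm : MulAut (M × M))) →* GL (Fin 2) F where
  toFun σ := if (σ : MulAut (M × M)) = 1 then 1 else swapGL
  map_one' := if_pos rfl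
  map_mul' x y := by
    have hxy : ((x * y : _) : MulAut (M × M)) = (x : MulAut (M × M)) * y := rfl
    rcases sq_one_classify (prodComm_sq M) x.2 with hx | hx <;>
      rcases sq_one_classify (prodComm_sq M) y.2 with hy | hy
    · simp [hxy, hx, hy]
    · simp [hxy, hx, hy]
    · simp [hxy, hx, hy]
    · have hxy1 : ((x * y : _) : MulAut (M × M)) = 1 := by
        rw [hxy, hx, hy, prodComm_sq]
      show (if ((x * y : _) : MulAut (M × M)) = 1 then (1 : GL (Fin 2) F) else swapGL)
          = (if (x : MulAut (M × M)) = 1 then (1 : GL (Fin 2) F) else swapGL) *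
            (if (y : MulAut (M × M)) = 1 then (1 : GL (Fin 2) F) else swapGL)
      rw [if_pos hxy1, hx, hy]
      by_cases h1 : (MulEquiv.prodComm : MulAut (M × M)) = 1
      · rw [if_pos h1, mul_one]
      · rw [if_neg h1, swapGL_mul_swapGL]

variable {M}

lemma swapHom_apply (σ : Subgroup.zpowers (MulEquiv.prodComm : MulAut (M × M))) :
    (swapHom M σ : GL (Fin 2) F) = if (σ : MulAut (M × M)) = 1 then 1 else swapGL := rfl

variable (f : M →* Fˣ)

lemma phi_compat :
    ∀ σ : Subgroup.zpowers (MulEquiv.prodComm : MulAut (M × M)),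
      ((diagHom (F := F)).comp (f.prodMap f)).comp
          ((Subgroup.subtype _ σ).toMonoidHom)
        = (MulAut.conj (swapHom M σ)).toMonoidHom.comp
            ((diagHom (F := F)).comp (f.prodMap f)) := by
  intro σ
  refine DFunLike.ext _ _ fun n => ?_
  simp only [MonoidHom.comp_apply, MulEquiv.coe_toMonoidHom, Subgroup.coe_subtype,
    MulAut.conj_apply, swapHom_apply]
  rcases sq_one_classify (prodComm_sq M) σ.2 with hσ | hσ <;> rw [hσ]
  · simp
  · by_cases h1 : (MulEquiv.prodComm : MulAut (M × M)) = 1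
    · rw [h1]; simp
    · rw [if_neg h1]
      show diagHom (f n.2, f n.1) = swapGL * diagHom (f n.1, f n.2) * swapGL⁻¹
      exact (swapGL_conj_diag _ _).symm

/-- the homomorphism from the wreath product to GL₂ -/
noncomputable def Phi : (SemidirectProduct (M × M)
    (Subgroup.zpowers (MulEquiv.prodComm : (M × M) ≃* (M × M)))
    (Subgroup.subtype _)) →* GL (Fin 2) F :=
  SemidirectProduct.lift ((diagHom (F := F)).comp (f.prodMap f)) (swapHom M) (phi_compat f)

lemma Phi_apply (x) : Phi f x = diagHom (f x.left.1, f x.left.2) * swapHom M x.right := rfl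

lemma Phi_injective [Nontrivial M] (hf : Function.Injective f) :
    Function.Injective (Phi f) := by
  rw [injective_iff_map_eq_one]
  intro x hx
  rw [Phi_apply] at hx
  rcases sq_one_classify (prodComm_sq M) x.right.2 with h | h
  · rw [swapHom_apply, if_pos h, mul_one] at hx
    obtain ⟨h1, h2⟩ := diagHom_eq_one hx
    have ha : x.left.1 = 1 := hf (by rw [h1, map_one])
    have hb : x.left.2 = 1 := hf (by rw [h2, map_one])
    exact SemidirectProduct.ext (by rw [Prod.ext_iff]; exact ⟨ha, hb⟩)
      (Subtype.ext (by rw [h]; rfl))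
  · rw [swapHom_apply, h, if_neg (prodComm_ne_one M)] at hx
    exact absurd hx (diag_mul_swap_ne_one _ _)

lemma Phi_inl (n : M × M) : Phi f (SemidirectProduct.inl n) = diagHom (f n.1, f n.2) := by
  rw [Phi, SemidirectProduct.lift_inl]; rfl

lemma Phi_inr (σ : Subgroup.zpowers (MulEquiv.prodComm : MulAut (M × M))) :
    Phi f (SemidirectProduct.inr σ) = swapHom M σ := by
  rw [Phi, SemidirectProduct.lift_inr]

end M

end Stmt17Aux

open Stmt17Aux


/-- The wreath product `M ≀ C₂`: the semidirect product of `M × M` by the order-2 group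
generated by the coordinate-swap automorphism. -/
abbrev wreathC2 (M : Type*) [CommGroup M] : Type _ :=
  SemidirectProduct (M × M)
    (Subgroup.zpowers (MulEquiv.prodComm : (M × M) ≃* (M × M)))
    (Subgroup.subtype _)

/-- Let `q ≡ 1 (mod 4)` be a prime power and `2^k` the 2-part of `q - 1`. The subgroup of
`GL_2(q)` generated by the diagonal matrices `diag(λ, μ)` with `λ, μ` 2-elements of `𝔽_q*`
together with the coordinate-swap matrix is a Sylow 2-subgroup of `GL_2(q)`, isomorphic to
the wreath product `C_{2^k} ≀ C₂`. In particular `|GL_2(q)|₂ = 2^(2k+1)`. -/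
theorem stmt17 (p m : ℕ) (hp : p.Prime) (hm : 0 < m) (q : ℕ) (hq : q = p ^ m)
    (hq1 : q % 4 = 1) (k : ℕ) (hk : k = (q - 1).factorization 2)
    (F : Type*) [Field F] [Fintype F] [DecidableEq F] (hF : Fintype.card F = q)
    (P : Subgroup (GL (Fin 2) F))
    (hP : P = Subgroup.closure
      ({A : GL (Fin 2) F | ∃ lam mu : Fˣ,
          (∃ a : ℕ, orderOf lam = 2 ^ a) ∧ (∃ b : ℕ, orderOf mu = 2 ^ b) ∧
          (A : Matrix (Fin 2) (Fin 2) F) = Matrix.diagonal ![(lam : F), (mu : F)]} ∪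
        {A : GL (Fin 2) F | (A : Matrix (Fin 2) (Fin 2) F) = !![0, 1; 1, 0]})) :
    (∃ Q : Sylow 2 (GL (Fin 2) F), (Q : Subgroup (GL (Fin 2) F)) = P) ∧
    Nonempty (P ≃* wreathC2 (Multiplicative (ZMod (2 ^ k)))) ∧
    (Nat.card (GL (Fin 2) F)).factorization 2 = 2 * k + 1 := by
  haveI : Fact (Nat.Prime 2) := ⟨Nat.prime_two⟩
  have hq2 : 2 ≤ q := by
    rw [hq]
    calc 2 ≤ p := hp.two_le
      _ ≤ p ^ m := Nat.le_self_pow hm.ne' p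
  have hqsub : q - 1 ≠ 0 := by omega
  have h2k : (2:ℕ)^k ∣ q - 1 := by rw [hk]; exact Nat.ordProj_dvd _ 2
  have hk2 : 2 ≤ k := by
    rw [hk]
    exact (Nat.Prime.pow_dvd_iff_le_factorization Nat.prime_two hqsub).mp
      (by rw [show (2:ℕ)^2 = 4 by norm_num]; omega)
  -- cardinality of GL₂ and its 2-adic valuation
  have hcardGL : Nat.card (GL (Fin 2) F) = ((q-1)*(q+1)) * (q*(q-1)) := by
    rw [Matrix.card_GL_field, hF, Fin.prod_univ_two]
    have e1 : q^2 - q^((0 : Fin 2):ℕ) = (q-1)*(q+1) := by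
      have h1 : 1 ≤ q^2 := Nat.one_le_pow _ _ (by omega)
      simp only [Fin.val_zero, pow_zero]
      zify [h1, show 1 ≤ q by omega]
      ring
    have e2 : q^2 - q^((1 : Fin 2):ℕ) = q*(q-1) := by
      have h1 : q ≤ q^2 := by nlinarith
      simp only [Fin.val_one, pow_one]
      zify [h1, show 1 ≤ q by omega]
      ring
    rw [e1, e2]
  have hq4 : (q+1).factorization 2 = 1 := by
    obtain ⟨s, hs, hsodd⟩ : ∃ s, q + 1 = 2*s ∧ ¬ (2 ∣ s) := ⟨(q+1)/2, by omega, by omega⟩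
    rw [hs, Nat.factorization_mul (by norm_num) (by omega)]
    simp only [Finsupp.coe_add, Pi.add_apply]
    rw [Nat.Prime.factorization_self Nat.prime_two,
      Nat.factorization_eq_zero_of_not_dvd hsodd]
  have hfac : (Nat.card (GL (Fin 2) F)).factorization 2 = 2*k+1 := by
    have h2 : q + 1 ≠ 0 := by omega
    have h3 : q ≠ 0 := by omega
    have hqv : q.factorization 2 = 0 := Nat.factorization_eq_zero_of_not_dvd (by omega)
    rw [hcardGL, Nat.factorization_mul (Nat.mul_ne_zero hqsub h2) (Nat.mul_ne_zero h3 hqsub),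
        Nat.factorization_mul hqsub h2, Nat.factorization_mul h3 hqsub]
    simp only [Finsupp.coe_add, Pi.add_apply]
    rw [hq4, hqv, ← hk]
    ring
  -- a generator of the 2-primary part of Fˣ
  have hcardu : Nat.card Fˣ = q - 1 := by rw [Nat.card_units, Nat.card_eq_fintype_card, hF]
  obtain ⟨g₀, hg₀⟩ := IsCyclic.exists_generator (α := Fˣ)
  have hord₀ : orderOf g₀ = q - 1 := by rw [orderOf_eq_card_of_forall_mem_zpowers hg₀, hcardu]
  set r := (q - 1) / 2^k with hrdef
  have hr : q - 1 = 2^k * r := (Nat.mul_div_cancel' h2k).symm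
  have hrodd : ¬ (2 ∣ r) := by rw [hrdef, hk]; exact Nat.not_dvd_ordCompl Nat.prime_two hqsub
  have hrne : r ≠ 0 := by intro h0; exact hrodd (by omega)
  set g := g₀ ^ r with hgdef
  have hordg : orderOf g = 2^k := by
    rw [hgdef, orderOf_pow, hord₀, Nat.gcd_eq_right ⟨2^k, by rw [hr]; ring⟩, hr,
      Nat.mul_div_cancel _ (Nat.pos_of_ne_zero hrne)]
  have two_of_mem : ∀ x : Fˣ, x ∈ Subgroup.zpowers g → ∃ a : ℕ, orderOf x = 2^a := by
    intro x hx
    have hdvd : orderOf x ∣ 2^k := hordg ▸ orderOf_dvd_of_mem_zpowers hx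
    obtain ⟨i, _, hi⟩ := (Nat.dvd_prime_pow Nat.prime_two).mp hdvd
    exact ⟨i, hi⟩
  have mem_of_two : ∀ x : Fˣ, (∃ a : ℕ, orderOf x = 2^a) → x ∈ Subgroup.zpowers g := by
    rintro x ⟨a, ha⟩
    have hdvd : orderOf x ∣ q - 1 := by
      rw [← hcardu, Nat.card_eq_fintype_card]; exact orderOf_dvd_card
    have hak : a ≤ k := by
      rw [hk]
      exact (Nat.Prime.pow_dvd_iff_le_factorization Nat.prime_two hqsub).mp (ha ▸ hdvd)
    have hx2k : x ^ 2^k = 1 := orderOf_dvd_iff_pow_eq_one.mp (ha ▸ pow_dvd_pow 2 hak)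
    obtain ⟨t, ht0⟩ := mem_powers_iff_mem_zpowers.mpr (hg₀ x)
    have ht : g₀ ^ t = x := ht0
    have hdv : 2^k * r ∣ t * 2^k := by
      rw [← hr, ← hord₀]
      exact orderOf_dvd_of_pow_eq_one (by rw [pow_mul, ht, hx2k])
    have hrt : r ∣ t :=
      (mul_dvd_mul_iff_left (a := (2:ℕ)^k) (pow_ne_zero k two_ne_zero)).mp
        (by rwa [mul_comm t] at hdv)
    obtain ⟨s, rfl⟩ := hrt
    have hxg : x = g ^ s := by rw [← ht, hgdef, ← pow_mul]
    rw [hxg]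
    exact Subgroup.pow_mem _ (Subgroup.mem_zpowers g) s
  -- the cyclic group M and the embedding f
  haveI : Fact (1 < 2^k) := ⟨Nat.one_lt_pow (by omega) (by norm_num)⟩
  set M := Multiplicative (ZMod (2^k)) with hMdef
  haveI : Nontrivial (ZMod (2^k)) := ZMod.nontrivial _
  haveI : Nontrivial M := ‹Nontrivial (ZMod (2^k))›
  have hcM : Nat.card M = 2^k := by
    rw [hMdef, Nat.card_congr Multiplicative.toAdd, Nat.card_zmod]
  have hcZ : Nat.card M = Nat.card (Subgroup.zpowers g) := by
    rw [hcM, Nat.card_zpowers, hordg]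
  set iso : M ≃* Subgroup.zpowers g := mulEquivOfCyclicCardEq hcZ with hisodef
  set f : M →* Fˣ := (Subgroup.zpowers g).subtype.comp iso.toMonoidHom with hfdef
  have hfinj : Function.Injective f := by
    rw [hfdef]
    exact (Subgroup.subtype_injective _).comp iso.injective
  have hfmem : ∀ x, f x ∈ Subgroup.zpowers g := fun x => (iso x).2
  have hfsurj : ∀ y ∈ Subgroup.zpowers g, ∃ x, f x = y := by
    intro y hy
    refine ⟨iso.symm ⟨y, hy⟩, ?_⟩
    rw [hfdef]
    simp
  -- the homomorphism Φ and its range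
  have hinj : Function.Injective (Phi f) := Phi_injective f hfinj
  have hrange : (Phi f).range = P := by
    rw [hP]
    apply le_antisymm
    · rintro x ⟨y, rfl⟩
      rw [Phi_apply]
      refine Subgroup.mul_mem _ (Subgroup.subset_closure (Or.inl ⟨f y.left.1, f y.left.2,
        two_of_mem _ (hfmem _), two_of_mem _ (hfmem _), rfl⟩)) ?_
      rcases sq_one_classify (prodComm_sq M) y.right.2 with h | h
      · rw [swapHom_apply, if_pos h]
        exact Subgroup.one_mem _
      · rw [swapHom_apply, h, if_neg (prodComm_ne_one M)]
        exact Subgroup.subset_closure (Or.inr rfl)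
    · rw [Subgroup.closure_le]
      rintro A (⟨lam, mu, ha, hb, hA⟩ | hA)
      · obtain ⟨a, hfa⟩ := hfsurj lam (mem_of_two lam ha)
        obtain ⟨b, hfb⟩ := hfsurj mu (mem_of_two mu hb)
        refine ⟨SemidirectProduct.inl (a, b), ?_⟩
        rw [Phi_inl]
        refine Units.ext ?_
        rw [diagHom_val, hfa, hfb, hA]
      · refine ⟨SemidirectProduct.inr ⟨MulEquiv.prodComm, Subgroup.mem_zpowers _⟩, ?_⟩
        rw [Phi_inr, swapHom_apply, if_neg (prodComm_ne_one M)]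
        exact Units.ext hA.symm
  -- assembling everything
  have isoP : P ≃* wreathC2 M :=
    (MulEquiv.subgroupCongr hrange.symm).trans (MonoidHom.ofInjective hinj).symm
  have hH2 : Nat.card (Subgroup.zpowers (MulEquiv.prodComm : MulAut (M × M))) = 2 := by
    rw [Nat.card_zpowers]
    exact orderOf_eq_prime (by rw [pow_two]; exact prodComm_sq M) (prodComm_ne_one M)
  have ew : wreathC2 M ≃ ((M × M) × (Subgroup.zpowers (MulEquiv.prodComm : MulAut (M × M)))) :=
    ⟨fun x => (x.left, x.right), fun y => ⟨y.1, y.2⟩, fun x => rfl, fun y => rfl⟩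
  have hcardW : Nat.card (wreathC2 M) = 2^(2*k+1) := by
    rw [Nat.card_congr ew, Nat.card_prod, Nat.card_prod, hcM, hH2]
    ring
  have hcardP : Nat.card P = 2^(2*k+1) := by
    rw [Nat.card_congr isoP.toEquiv, hcardW]
  exact ⟨⟨Sylow.ofCard P (by rw [hcardP, hfac]), Sylow.coe_ofCard P _⟩, ⟨isoP⟩, hfac⟩
end
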